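/- Let n = (2r+1)p + q with p ≥ 1 and r+2 ≤ q ≤ 2r. If p is even, the minimum size of an r-identifying code of the path P_n is (2r+1)p/2 + q - 1; if p is odd, it is (2r+1)(p-1)/2 + 2r + 1. -/

import Mathlib

/-- `Dr G r D x` = `N_r[x] ∩ D`. -/
def Dr {V : Type*} (G : SimpleGraph V) (r : ℕ) (D : Set V) (x : V) : Set V :=
  {y | y ∈ D ∧ G.dist x y ≤ r}

/-- `D` is an `r`-identifying code of `G`. -/
def IsIdCode {V : Type*} (G : SimpleGraph V) (r : ℕ) (D : Set V) : Prop :=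
  (∀ x, (Dr G r D x).Nonempty) ∧ ∀ x y, x ≠ y → Dr G r D x ≠ Dr G r D y

/-- `D` is an `r`-locating-dominating set of `G`. -/
def IsLD {V : Type*} (G : SimpleGraph V) (r : ℕ) (D : Set V) : Prop :=
  (∀ x ∉ D, (Dr G r D x).Nonempty) ∧
    ∀ x ∉ D, ∀ y ∉ D, x ≠ y → Dr G r D x ≠ Dr G r D y

/-- The cycle graph on `ZMod n`. -/
def cycleG (n : ℕ) : SimpleGraph (ZMod n) :=
  SimpleGraph.fromRel (fun x y => x - y = 1)

/-!
On the path, the balls `N_r[i]` and `N_r[i+1]` differ exactly in the vertices `i - r` and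
`i + r + 1`, so a code must contain one of them for every `i`. Read along the residue classes
modulo `2r+1`, this says that no two consecutive members of a class are both missing, and it
forces the first member of each class `r+1, …, 2r` and every vertex of `[n-2r-1, n-r-2]`,
which is the last member of its class. A class of length `L` with `e` forced ends therefore
carries at least `⌊(L + e)/2⌋` code vertices, and summing over the classes gives the bound. Codes that take, in alternate blocks of `2r+1` consecutive vertices,
complementary sets of residues attain it.
-/

namespace SimpleGraph

theorem pathGraph_natDist_le_length {n : ℕ} {u v : Fin n} (w : (pathGraph n).Walk u v) :
    Nat.dist u v ≤ w.length := by
  induction w with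
  | nil => simp
  | @cons a b c h w ih =>
    rw [pathGraph_adj] at h
    have := Nat.dist.triangle_inequality a b c
    simp only [Walk.length_cons, Nat.dist] at *
    omega

theorem pathGraph_dist_le_of_val_eq_add {n : ℕ} (u : Fin n) :
    ∀ (k : ℕ) (v : Fin n), (v : ℕ) = u + k → (pathGraph n).dist u v ≤ k
  | 0, v, h => by simp [show u = v from Fin.ext (by omega)]
  | k + 1, v, h => by
    let w : Fin n := ⟨u + k, by omega⟩
    have hwv : (pathGraph n).Adj w v := by
      rw [pathGraph_adj]; left; change (u : ℕ) + k + 1 = v; omega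
    calc (pathGraph n).dist u v ≤ (pathGraph n).dist u w + (pathGraph n).dist w v :=
          hwv.reachable.dist_triangle_right u
      _ ≤ k + 1 := by
          rw [dist_eq_one_iff_adj.2 hwv]
          exact Nat.add_le_add_right (pathGraph_dist_le_of_val_eq_add u k w rfl) 1

theorem pathGraph_dist {n : ℕ} (u v : Fin n) : (pathGraph n).dist u v = Nat.dist u v := by
  refine le_antisymm ?_ ?_
  · rcases le_total (u : ℕ) v with h | h
    · exact pathGraph_dist_le_of_val_eq_add u _ v (by simp [Nat.dist]; omega)
    · rw [dist_comm, Nat.dist_comm]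
      exact pathGraph_dist_le_of_val_eq_add v _ u (by simp [Nat.dist]; omega)
  · obtain ⟨w, hw⟩ := (pathGraph_preconnected n u v).exists_walk_length_eq_dist
    exact hw ▸ pathGraph_natDist_le_length w

end SimpleGraph

open SimpleGraph

section PathCode

variable {n r : ℕ} {S : Set ℕ}

def PathDominates (n r : ℕ) (S : Set ℕ) : Prop :=
  ∀ x < n, ∃ d ∈ S, d < n ∧ d ≤ x + r ∧ x ≤ d + r

def PathSeparatesNeighbours (n r : ℕ) (S : Set ℕ) : Prop :=
  ∀ i, i + 1 < n → (r ≤ i ∧ i - r ∈ S) ∨ (i + r + 1 < n ∧ i + r + 1 ∈ S)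

theorem mem_Dr_pathGraph_preimage {x z : Fin n} :
    z ∈ Dr (pathGraph n) r (Fin.val ⁻¹' S) x ↔ (z : ℕ) ∈ S ∧ (z : ℕ) ≤ x + r ∧ (x : ℕ) ≤ z + r := by
  simp only [Dr, Set.mem_ofPred_eq, Set.mem_preimage, pathGraph_dist, Nat.dist]
  exact and_congr_right fun _ => by omega

theorem Dr_pathGraph_preimage_ne {x y : Fin n}
    (h : ∃ z : Fin n, (z : ℕ) ∈ S ∧
      ((z : ℕ) ≤ x + r ∧ (x : ℕ) ≤ z + r ↔ ¬ ((z : ℕ) ≤ y + r ∧ (y : ℕ) ≤ z + r))) :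
    Dr (pathGraph n) r (Fin.val ⁻¹' S) x ≠ Dr (pathGraph n) r (Fin.val ⁻¹' S) y := by
  obtain ⟨z, hzS, hz⟩ := h
  intro hD
  have := congrArg (z ∈ ·) hD
  simp only [mem_Dr_pathGraph_preimage, eq_iff_iff] at this
  tauto

theorem isIdCode_pathGraph_preimage_iff :
    IsIdCode (pathGraph n) r (Fin.val ⁻¹' S) ↔
      PathDominates n r S ∧ PathSeparatesNeighbours n r S := by
  constructor
  · rintro ⟨hdom, hsep⟩
    refine ⟨fun x hx => ?_, fun i hi => ?_⟩
    · obtain ⟨z, hz⟩ := hdom ⟨x, hx⟩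
      rw [mem_Dr_pathGraph_preimage] at hz
      exact ⟨z, hz.1, z.isLt, hz.2⟩
    · obtain ⟨z, hz⟩ : ∃ z, ¬ (z ∈ Dr (pathGraph n) r (Fin.val ⁻¹' S) ⟨i, by omega⟩ ↔
          z ∈ Dr (pathGraph n) r (Fin.val ⁻¹' S) ⟨i + 1, hi⟩) := by
        by_contra! h
        exact hsep _ _ (by simp) (Set.ext h)
      simp only [mem_Dr_pathGraph_preimage] at hz
      have hzS : (z : ℕ) ∈ S := by tauto
      by_cases hzi : (z : ℕ) + r = i
      · exact Or.inl ⟨by omega, by rwa [← hzi, Nat.add_sub_cancel]⟩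
      · have hz' : (z : ℕ) = i + r + 1 := by
          by_contra
          exact hz (and_congr_right fun _ => by omega)
        exact Or.inr ⟨by omega, hz' ▸ hzS⟩
  · rintro ⟨hdom, hsep⟩
    have hne : ∀ x y : Fin n, (x : ℕ) < y →
        Dr (pathGraph n) r (Fin.val ⁻¹' S) x ≠ Dr (pathGraph n) r (Fin.val ⁻¹' S) y := by
      intro x y hxy
      apply Dr_pathGraph_preimage_ne
      by_cases hfar : (x : ℕ) + 2 * r + 2 ≤ y
      · obtain ⟨d, hdS, hdn, hd⟩ := hdom x x.isLt
        exact ⟨⟨d, hdn⟩, hdS, by simp only; omega⟩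
      · rcases hsep x (by omega) with ⟨hrx, hd⟩ | ⟨hdn, hd⟩
        · exact ⟨⟨x - r, by omega⟩, hd, by simp only; omega⟩
        · exact ⟨⟨x + r + 1, hdn⟩, hd, by simp only; omega⟩
    refine ⟨fun x => ?_, fun x y hxy => ?_⟩
    · obtain ⟨d, hdS, hdn, hd⟩ := hdom x x.isLt
      exact ⟨⟨d, hdn⟩, mem_Dr_pathGraph_preimage.2 ⟨hdS, hd⟩⟩
    · rcases lt_or_gt_of_ne (Fin.val_injective.ne hxy) with h | h
      · exact hne x y h
      · exact (hne y x h).symm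

theorem pathSeparatesNeighbours_iff (hn : 2 * r < n) :
    PathSeparatesNeighbours n r S ↔
      (∀ x, x + (2 * r + 1) < n → x ∈ S ∨ x + (2 * r + 1) ∈ S) ∧
      (∀ x, r < x → x ≤ 2 * r → x < n → x ∈ S) ∧
      (∀ x, n ≤ x + (2 * r + 1) → x + r + 2 ≤ n → x ∈ S) := by
  constructor
  · intro h
    refine ⟨fun x hx => ?_, fun x hrx hx2r hxn => ?_, fun x hnx hxn => ?_⟩
    · rcases h (x + r) (by omega) with ⟨-, hx⟩ | ⟨-, hx⟩
      · exact Or.inl (by rwa [Nat.add_sub_cancel] at hx)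
      · exact Or.inr (by rwa [show x + r + r + 1 = x + (2 * r + 1) by ring] at hx)
    · rcases h (x - r - 1) (by omega) with ⟨_, _⟩ | ⟨-, hx⟩
      · omega
      · rwa [show x - r - 1 + r + 1 = x by omega] at hx
    · rcases h (x + r) (by omega) with ⟨-, hx⟩ | ⟨_, _⟩
      · rwa [Nat.add_sub_cancel] at hx
      · omega
  · rintro ⟨hpair, hhead, htail⟩ i hi
    rcases lt_or_ge (i + r + 1) n with hin | hin <;> rcases lt_or_ge i r with hir | hir
    · exact Or.inr ⟨hin, hhead _ (by omega) (by omega) hin⟩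
    · rcases hpair (i - r) (by omega) with h | h
      · exact Or.inl ⟨hir, h⟩
      · exact Or.inr ⟨hin, by rwa [show i - r + (2 * r + 1) = i + r + 1 by omega] at h⟩
    · omega
    · exact Or.inl ⟨hir, htail _ (by omega) (by omega)⟩

theorem pathDominates_of_exists_next {a : ℕ} (ha : a ∈ S) (han : a < n) (har : a ≤ r)
    (hnext : ∀ d ∈ S, d + r + 2 ≤ n → ∃ e ∈ S, e < n ∧ d < e ∧ e ≤ d + (2 * r + 1)) :
    PathDominates n r S := by
  intro x
  induction x using Nat.strong_induction_on with
  | _ x ih =>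
    intro hx
    by_cases hxa : x ≤ a + r
    · exact ⟨a, ha, han, by omega, hxa⟩
    obtain ⟨d, hd, hdn, hdx, hxd⟩ := ih (x - 1) (by omega) (by omega)
    by_cases hxd' : x ≤ d + r
    · exact ⟨d, hd, hdn, by omega, hxd'⟩
    obtain ⟨e, he, hen, hde, hed⟩ := hnext d hd (by omega)
    exact ⟨e, he, hen, by omega, by omega⟩

end PathCode

open Nat (count count_succ count_succ' count_eq_card_filter_range)

def CoversConsecutive (T : ℕ → Prop) (L : ℕ) : Prop :=
  ∀ j, j + 1 < L → T j ∨ T (j + 1)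

namespace CoversConsecutive

variable {T : ℕ → Prop} {L : ℕ}

theorem mono {L' : ℕ} (h : CoversConsecutive T L) (hL : L' ≤ L) : CoversConsecutive T L' :=
  fun j hj => h j (by omega)

theorem shift (h : CoversConsecutive T (L + 1)) : CoversConsecutive (fun j => T (j + 1)) L :=
  fun j hj => h (j + 1) (by omega)

variable [DecidablePred T]

theorem div_two_le_count (h : CoversConsecutive T L) : L / 2 ≤ count T L := by
  induction L using Nat.strong_induction_on with
  | _ L ih =>
    match L, h with
    | 0, _ | 1, _ => simp
    | L + 2, h =>
      have := ih L (by omega) (h.mono (by omega))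
      rw [count_succ, count_succ]
      rcases h L (by omega) with hL | hL <;> simp only [hL, if_true] <;> split_ifs <;> omega

theorem succ_div_two_le_count (h : CoversConsecutive T L) (h0 : T 0) :
    (L + 1) / 2 ≤ count T L := by
  match L, h with
  | 0, _ => simp
  | L + 1, h =>
    have := h.shift.div_two_le_count
    rw [count_succ', if_pos h0]
    omega

theorem add_two_div_two_le_count_succ (h : CoversConsecutive T (L + 1)) (hL : T L) :
    (L + 2) / 2 ≤ count T (L + 1) := by
  have := (h.mono L.le_succ).div_two_le_count
  rw [count_succ, if_pos hL]
  omega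

theorem add_three_div_two_le_count_succ (h : CoversConsecutive T (L + 1)) (h0 : T 0)
    (hL : T L) : (L + 3) / 2 ≤ count T (L + 1) := by
  rcases L.eq_zero_or_pos with rfl | hL0
  · simp [count_succ, h0]
  have := (h.mono L.le_succ).succ_div_two_le_count h0
  rw [count_succ, if_pos hL]
  omega

end CoversConsecutive

open Finset in
theorem Nat.count_eq_sum_count_add_mul (P : ℕ → Prop) [DecidablePred P] {m n : ℕ} (hm : 0 < m)
    (L : ℕ → ℕ) (hL : ∀ c < m, ∀ j, c + m * j < n ↔ j < L c) :
    count P n = ∑ c ∈ range m, count (fun j => P (c + m * j)) (L c) := by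
  rw [count_eq_card_filter_range,
    card_eq_sum_card_fiberwise (f := (· % m)) fun k _ => mem_range.2 (k.mod_lt hm)]
  refine sum_congr rfl fun c hc => ?_
  have hcm : c < m := mem_range.1 hc
  have hinj : Function.Injective (fun j => c + m * j) := fun j j' h => by
    simpa [hm.ne'] using h
  rw [count_eq_card_filter_range,
    ← Finset.card_image_of_injective ((range (L c)).filter fun j => P (c + m * j)) hinj]
  congr 1
  ext k
  simp only [mem_filter, mem_range, mem_image]
  constructor
  · rintro ⟨⟨hkn, hPk⟩, rfl⟩
    refine ⟨k / m, ⟨?_, ?_⟩, k.mod_add_div m⟩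
    · rwa [← hL _ hcm, k.mod_add_div m]
    · rwa [k.mod_add_div m]
  · rintro ⟨j, ⟨hj, hPj⟩, rfl⟩
    exact ⟨⟨(hL c hcm j).2 hj, hPj⟩, by simp [Nat.mod_eq_of_lt hcm]⟩

theorem add_mul_lt_mul_add_iff {m p q c j : ℕ} (hc : c < m) (hq : q ≤ m) :
    c + m * j < m * p + q ↔ j < if c < q then p + 1 else p := by
  rcases lt_trichotomy j p with hjp | rfl | hjp
  · have : m * (j + 1) ≤ m * p := Nat.mul_le_mul_left m hjp
    rw [mul_add_one] at this
    split_ifs <;> omega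
  · split_ifs <;> omega
  · have : m * (p + 1) ≤ m * j := Nat.mul_le_mul_left m hjp
    rw [mul_add_one] at this
    split_ifs <;> omega

theorem Nat.count_mod_two_eq_one (L : ℕ) : count (· % 2 = 1) L = L / 2 := by
  induction L with
  | zero => simp
  | succ L ih => rw [count_succ, ih]; split_ifs <;> omega

theorem Nat.count_mod_two_eq_zero (L : ℕ) : count (· % 2 = 0) L = (L + 1) / 2 := by
  induction L with
  | zero => simp
  | succ L ih => rw [count_succ, ih]; split_ifs <;> omega

theorem Nat.count_mod_two_eq_one_iff_le (b : Prop) [Decidable b] (L : ℕ) :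
    count (fun j => j % 2 = 1 ↔ b) L ≤ (L + 1) / 2 := by
  by_cases hb : b
  · simp only [hb, iff_true, Nat.count_mod_two_eq_one]; omega
  · simp only [hb, iff_false, Nat.mod_two_ne_one, Nat.count_mod_two_eq_zero, le_refl]

theorem ncard_preimage_val_eq_count (S : Set ℕ) [DecidablePred (· ∈ S)] (n : ℕ) :
    (Fin.val ⁻¹' S : Set (Fin n)).ncard = count (· ∈ S) n := by
  have hS : (Fin.val ⁻¹' S : Set (Fin n)) = Fin.val ⁻¹' ↑((Finset.range n).filter (· ∈ S)) := by
    ext x; simp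
  rw [hS, Set.ncard_preimage_of_injective_subset_range Fin.val_injective (by
    intro k hk; simp only [Finset.coe_filter, Finset.mem_range] at hk; exact ⟨⟨k, hk.1⟩, rfl⟩),
    Set.ncard_coe_finset, count_eq_card_filter_range]

/-- A residue class of length `L` with `e` forced ends needs `⌊(L + e)/2⌋` code vertices: this is
`(p + 1)/2` for the classes `q - r - 1 ≤ c ≤ r`, which have no forced end, and `(p + 2)/2` for
all others. -/
def classBound (r p q c : ℕ) : ℕ :=
  if q ≤ c + r + 1 ∧ c ≤ r then (p + 1) / 2 else (p + 2) / 2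

theorem sum_classBound {r p q : ℕ} (hq₁ : r + 1 ≤ q) (hq₂ : q ≤ 2 * r + 1) :
    ∑ c ∈ Finset.range (2 * r + 1), classBound r p q c
      = (2 * r + 2 - q) * ((p + 1) / 2) + (q - 1) * ((p + 2) / 2) := by
  have hfree : (Finset.range (2 * r + 1)).filter (fun c => q ≤ c + r + 1 ∧ c ≤ r)
      = Finset.Icc (q - r - 1) r := by
    ext c; simp only [Finset.mem_filter, Finset.mem_range, Finset.mem_Icc]; omega
  have hcard := Finset.card_filter_add_card_filter_not (s := Finset.range (2 * r + 1))
    (fun c => q ≤ c + r + 1 ∧ c ≤ r)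
  rw [hfree, Nat.card_Icc, Finset.card_range] at hcard
  simp only [classBound, Finset.sum_ite, Finset.sum_const, smul_eq_mul, hfree, Nat.card_Icc]
  congr 2 <;> omega

theorem sum_classBound_of_even {r p q : ℕ} (hq₁ : r + 1 ≤ q) (hq₂ : q ≤ 2 * r + 1) (hp : Even p) :
    ∑ c ∈ Finset.range (2 * r + 1), classBound r p q c = (2 * r + 1) * p / 2 + q - 1 := by
  obtain ⟨k, rfl⟩ := hp
  have hsplit : 2 * r + 1 = (2 * r + 2 - q) + (q - 1) := by omega
  rw [sum_classBound hq₁ hq₂, Nat.mul_div_assoc _ (even_iff_two_dvd.1 ⟨k, rfl⟩),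
    Nat.add_sub_assoc (by omega : 1 ≤ q), hsplit, show (k + k + 1) / 2 = k by omega,
    show (k + k + 2) / 2 = k + 1 by omega, show (k + k) / 2 = k by omega]
  ring

theorem sum_classBound_of_odd {r p q : ℕ} (hq₁ : r + 1 ≤ q) (hq₂ : q ≤ 2 * r + 1) (hp : Odd p) :
    ∑ c ∈ Finset.range (2 * r + 1), classBound r p q c = (2 * r + 1) * (p - 1) / 2 + 2 * r + 1 := by
  obtain ⟨k, rfl⟩ := hp
  rw [sum_classBound hq₁ hq₂, show (2 * k + 1 + 1) / 2 = k + 1 by omega,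
    show (2 * k + 1 + 2) / 2 = k + 1 by omega, Nat.add_sub_cancel,
    show (2 * r + 1) * (2 * k) = (2 * r + 1) * k * 2 by ring, Nat.mul_div_cancel _ two_pos,
    ← add_mul, show 2 * r + 2 - q + (q - 1) = 2 * r + 1 by omega]
  ring

section LowerBound

variable {r p q : ℕ} {S : Set ℕ} [DecidablePred (· ∈ S)]

theorem classBound_le_count_add_mul (hp : 1 ≤ p) (hq₁ : r + 1 ≤ q) (hq₂ : q ≤ 2 * r + 1)
    (hsep : PathSeparatesNeighbours ((2 * r + 1) * p + q) r S) {c : ℕ} (hc : c < 2 * r + 1) :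
    classBound r p q c
      ≤ count (fun j => c + (2 * r + 1) * j ∈ S) (if c < q then p + 1 else p) := by
  set m := 2 * r + 1 with hm
  have hmp : m ≤ m * p := Nat.le_mul_of_pos_right m hp
  obtain ⟨hpair, hhead, htail⟩ := (pathSeparatesNeighbours_iff (by omega)).1 hsep
  have hchain : CoversConsecutive (fun j => c + m * j ∈ S) (if c < q then p + 1 else p) := by
    intro j hj
    have hj' := (add_mul_lt_mul_add_iff (j := j + 1) hc hq₂).2 hj
    rw [mul_add_one, ← add_assoc] at hj'
    have := hpair (c + m * j) hj'
    rwa [add_assoc, ← mul_add_one] at this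
  unfold classBound
  by_cases hfree : q ≤ c + r + 1 ∧ c ≤ r
  · rw [if_pos hfree]
    rw [if_pos (show c < q by omega)] at hchain ⊢
    exact hchain.div_two_le_count
  rw [if_neg hfree]
  by_cases hcq : c < q
  · rw [if_pos hcq] at hchain ⊢
    by_cases hlow : c + r + 2 ≤ q
    · exact hchain.add_two_div_two_le_count_succ (htail _ (by omega) (by omega))
    · exact hchain.succ_div_two_le_count (by simpa using hhead c (by omega) (by omega) (by omega))
  · rw [if_neg hcq] at hchain ⊢
    obtain ⟨p', rfl⟩ : ∃ p', p = p' + 1 := ⟨p - 1, by omega⟩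
    have := mul_add_one m p'
    exact hchain.add_three_div_two_le_count_succ
      (by simpa using hhead c (by omega) (by omega) (by omega)) (htail _ (by omega) (by omega))

theorem sum_classBound_le_count (hp : 1 ≤ p) (hq₁ : r + 1 ≤ q) (hq₂ : q ≤ 2 * r + 1)
    (hsep : PathSeparatesNeighbours ((2 * r + 1) * p + q) r S) :
    ∑ c ∈ Finset.range (2 * r + 1), classBound r p q c ≤ count (· ∈ S) ((2 * r + 1) * p + q) := by
  rw [Nat.count_eq_sum_count_add_mul _ (by omega) _ fun c hc j => add_mul_lt_mul_add_iff hc hq₂]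
  exact Finset.sum_le_sum fun c hc =>
    classBound_le_count_add_mul hp hq₁ hq₂ hsep (Finset.mem_range.1 hc)

end LowerBound

theorem sum_classBound_le_ncard {r p q : ℕ} (hp : 1 ≤ p) (hq₁ : r + 1 ≤ q) (hq₂ : q ≤ 2 * r + 1)
    {D : Set (Fin ((2 * r + 1) * p + q))} (hD : IsIdCode (pathGraph ((2 * r + 1) * p + q)) r D) :
    ∑ c ∈ Finset.range (2 * r + 1), classBound r p q c ≤ D.ncard := by
  classical
  rw [← Set.preimage_image_eq D Fin.val_injective] at hD ⊢
  rw [ncard_preimage_val_eq_count]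
  exact sum_classBound_le_count hp hq₁ hq₂ (isIdCode_pathGraph_preimage_iff.1 hD).2

theorem le_and_lt_of_add_mul_add_lt {m p q c j k : ℕ} (hq : q ≤ m)
    (h : c + m * j + k < m * p + q) : j ≤ p ∧ (j = p → c + k < q) := by
  have hjp : j ≤ p := by
    by_contra! hjp
    have : m * p + m ≤ m * j := by simpa [mul_add_one] using Nat.mul_le_mul_left m hjp
    omega
  exact ⟨hjp, by rintro rfl; omega⟩

/-- `c` and `j` stand for the residue of `k` modulo `m` and its index within that class. -/
def residuePattern (m : ℕ) (cond : ℕ → ℕ → Prop) : Set ℕ :=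
  {k | cond (k % m) (k / m)}

section ResiduePattern

variable {m : ℕ} {cond : ℕ → ℕ → Prop}

theorem add_mul_mem_residuePattern_iff {c j : ℕ} (hc : c < m) :
    c + m * j ∈ residuePattern m cond ↔ cond c j := by
  simp [residuePattern, Nat.mod_eq_of_lt hc, Nat.add_mul_div_left _ _ (c.zero_le.trans_lt hc),
    Nat.div_eq_of_lt hc]

theorem mem_residuePattern_iff_of_lt {c : ℕ} (hc : c < m) :
    c ∈ residuePattern m cond ↔ cond c 0 := by
  simpa using add_mul_mem_residuePattern_iff (cond := cond) (j := 0) hc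

theorem pathSeparatesNeighbours_residuePattern {r p q : ℕ} (hp : 1 ≤ p) (hq : q ≤ 2 * r + 1)
    (hpair : ∀ c j, cond c j ∨ cond c (j + 1))
    (hhead : ∀ c, r < c → c ≤ 2 * r → cond c 0)
    (hlast : ∀ c, c + r + 2 ≤ q → cond c p)
    (hlast' : ∀ c, q ≤ c → c ≤ 2 * r → cond c (p - 1)) :
    PathSeparatesNeighbours ((2 * r + 1) * p + q) r (residuePattern (2 * r + 1) cond) := by
  set m := 2 * r + 1 with hm
  have hmp : m ≤ m * p := Nat.le_mul_of_pos_right m hp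
  refine (pathSeparatesNeighbours_iff (by omega)).2
    ⟨fun x _ => ?_, fun x hrx hx _ => ?_, fun x hnx hxn => ?_⟩
  · rw [← hm]
    simp only [residuePattern, Set.mem_ofPred_eq, Nat.add_mod_right,
      Nat.add_div_right _ (by omega : 0 < m)]
    exact hpair _ _
  · exact (mem_residuePattern_iff_of_lt (by omega)).2 (hhead x hrx hx)
  · rcases le_or_gt (m * p) x with h | h
    · obtain ⟨c, rfl⟩ : ∃ c, x = c + m * p := ⟨x - m * p, by omega⟩
      exact (add_mul_mem_residuePattern_iff (by omega)).2 (hlast c (by omega))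
    · have := Nat.mul_sub_one m p
      obtain ⟨c, rfl⟩ : ∃ c, x = c + m * (p - 1) := ⟨x - m * (p - 1), by omega⟩
      exact (add_mul_mem_residuePattern_iff (by omega)).2 (hlast' c (by omega) (by omega))

theorem pathDominates_residuePattern {n r a : ℕ} (hm : 0 < m) (ha : a ∈ residuePattern m cond)
    (han : a < n) (har : a ≤ r) (hmr : m ≤ 2 * r + 1)
    (hnext : ∀ c j, c < m → cond c j → c + m * j + (r + 1) < n →
      (∃ c', c < c' ∧ c' < m ∧ cond c' j ∧ c' + m * j < n) ∨
      (∃ c' ≤ c, cond c' (j + 1) ∧ c' + m * (j + 1) < n)) :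
    PathDominates n r (residuePattern m cond) := by
  refine pathDominates_of_exists_next ha han har fun d hd hdn => ?_
  have hdm := Nat.mod_add_div d m
  have hdm' := Nat.mod_lt d hm
  rw [← hdm] at hd
  rcases hnext _ _ hdm' ((add_mul_mem_residuePattern_iff hdm').1 hd) (by omega) with
    ⟨c', hc, hc'm, hcond, hlt⟩ | ⟨c', hc, hcond, hlt⟩
  · exact ⟨_, (add_mul_mem_residuePattern_iff hc'm).2 hcond, hlt, by omega, by omega⟩
  · have := mul_add_one m (d / m)
    exact ⟨_, (add_mul_mem_residuePattern_iff (by omega)).2 hcond, hlt, by omega, by omega⟩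

end ResiduePattern

def evenCode (r p q : ℕ) : Set ℕ :=
  residuePattern (2 * r + 1) fun c j => (j % 2 = 1 ↔ q ≤ c + r + 1 ∧ c ≤ r) ∨ (j + 1 = p ∧ q ≤ c)

def oddCode (r q : ℕ) : Set ℕ :=
  residuePattern (2 * r + 1) fun c j => j % 2 = 1 ↔ c + r + 2 ≤ q ∨ c = r

section Constructions

variable {r p q : ℕ}

theorem isIdCode_evenCode (hp : Even p) (hp₀ : 1 ≤ p) (hq₁ : r + 2 ≤ q) (hq₂ : q ≤ 2 * r) :
    IsIdCode (pathGraph ((2 * r + 1) * p + q)) r (Fin.val ⁻¹' evenCode r p q) := by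
  rw [Nat.even_iff] at hp
  have hmp : 2 * r + 1 ≤ (2 * r + 1) * p := Nat.le_mul_of_pos_right _ hp₀
  refine isIdCode_pathGraph_preimage_iff.2 ⟨?_, ?_⟩
  · refine pathDominates_residuePattern (a := 0) (by omega)
      ((mem_residuePattern_iff_of_lt (by omega)).2 (by omega)) (by omega) r.zero_le le_rfl
      fun c j hc hcond hd => ?_
    obtain ⟨hjp, hjp'⟩ := le_and_lt_of_add_mul_add_lt (by omega) hd
    have hlt (c' j' : ℕ) (hc' : c' < 2 * r + 1) :=
      add_mul_lt_mul_add_iff (p := p) (j := j') hc' (show q ≤ 2 * r + 1 by omega)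
    by_cases hj : j % 2 = 1
    · exact Or.inr ⟨0, c.zero_le, by omega, (hlt 0 _ (by omega)).2 (by split_ifs <;> omega)⟩
    by_cases hc' : c + r + 1 < q
    · exact Or.inl ⟨r + 1, by omega, by omega, by omega,
        (hlt _ _ (by omega)).2 (by split_ifs <;> omega)⟩
    · exact Or.inr ⟨q - r - 1, by omega, by omega,
        (hlt _ _ (by omega)).2 (by split_ifs <;> omega)⟩
  · exact pathSeparatesNeighbours_residuePattern hp₀ (by omega) (by omega) (by omega) (by omega)
      (by omega)

theorem isIdCode_oddCode (hp : Odd p) (hq₁ : r + 2 ≤ q) (hq₂ : q ≤ 2 * r) :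
    IsIdCode (pathGraph ((2 * r + 1) * p + q)) r (Fin.val ⁻¹' oddCode r q) := by
  rw [Nat.odd_iff] at hp
  have hmp : 2 * r + 1 ≤ (2 * r + 1) * p := Nat.le_mul_of_pos_right _ (by omega)
  refine isIdCode_pathGraph_preimage_iff.2 ⟨?_, ?_⟩
  · refine pathDominates_residuePattern (a := q - r - 1) (by omega)
      ((mem_residuePattern_iff_of_lt (by omega)).2 (by omega)) (by omega) (by omega) le_rfl
      fun c j hc hcond hd => ?_
    obtain ⟨hjp, hjp'⟩ := le_and_lt_of_add_mul_add_lt (by omega) hd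
    have hlt (c' j' : ℕ) (hc' : c' < 2 * r + 1) :=
      add_mul_lt_mul_add_iff (p := p) (j := j') hc' (show q ≤ 2 * r + 1 by omega)
    by_cases hj : j % 2 = 1
    · by_cases hcr : c = r
      · exact Or.inr ⟨q - r - 1, by omega, by omega,
          (hlt _ _ (by omega)).2 (by split_ifs <;> omega)⟩
      · exact Or.inl ⟨r, by omega, by omega, by omega,
          (hlt _ _ (by omega)).2 (by split_ifs <;> omega)⟩
    · exact Or.inr ⟨0, c.zero_le, by omega, (hlt 0 _ (by omega)).2 (by split_ifs <;> omega)⟩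
  · exact pathSeparatesNeighbours_residuePattern (by omega) (by omega) (by omega) (by omega)
      (by omega) (by omega)

theorem count_evenCode_le (hp : Even p) (hp₀ : 1 ≤ p) (hq₁ : r + 1 ≤ q) (hq₂ : q ≤ 2 * r + 1)
    [DecidablePred (· ∈ evenCode r p q)] :
    count (· ∈ evenCode r p q) ((2 * r + 1) * p + q)
      ≤ ∑ c ∈ Finset.range (2 * r + 1), classBound r p q c := by
  rw [Nat.even_iff] at hp
  rw [Nat.count_eq_sum_count_add_mul _ (by omega) _ fun c hc j => add_mul_lt_mul_add_iff hc hq₂]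
  refine Finset.sum_le_sum fun c hc => ?_
  have hmem := fun j (h : c + (2 * r + 1) * j ∈ evenCode r p q) =>
    (add_mul_mem_residuePattern_iff (Finset.mem_range.1 hc)).1 h
  unfold classBound
  split_ifs with hcq hfree hfree
  · calc _ ≤ count (· % 2 = 1) (p + 1) := Nat.count_mono_left fun j _ h => by
          have := hmem j h; omega
      _ = (p + 1) / 2 := Nat.count_mod_two_eq_one _
  · calc _ ≤ count (· % 2 = 0) (p + 1) := Nat.count_mono_left fun j _ h => by
          have := hmem j h; omega
      _ = (p + 2) / 2 := Nat.count_mod_two_eq_zero _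
  · omega
  · obtain ⟨p', hp'⟩ : ∃ p', p = p' + 1 := ⟨p - 1, by omega⟩
    have : count (fun j => c + (2 * r + 1) * j ∈ evenCode r p q) p' ≤ count (· % 2 = 0) p' :=
      Nat.count_mono_left fun j hj h => by have := hmem j h; omega
    have hsucc := count_succ (fun j => c + (2 * r + 1) * j ∈ evenCode r p q) p'
    rw [Nat.count_mod_two_eq_zero] at this
    rw [← hp'] at hsucc
    split_ifs at hsucc <;> omega

theorem count_oddCode_le (hp : Odd p) (hq : q ≤ 2 * r + 1)
    [DecidablePred (· ∈ oddCode r q)] :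
    count (· ∈ oddCode r q) ((2 * r + 1) * p + q)
      ≤ ∑ c ∈ Finset.range (2 * r + 1), classBound r p q c := by
  rw [Nat.odd_iff] at hp
  rw [Nat.count_eq_sum_count_add_mul _ (by omega) _ fun c hc j => add_mul_lt_mul_add_iff hc hq]
  refine Finset.sum_le_sum fun c hc => ?_
  have hmem := fun j (h : c + (2 * r + 1) * j ∈ oddCode r q) =>
    (add_mul_mem_residuePattern_iff (Finset.mem_range.1 hc)).1 h
  calc _ ≤ count (fun j => j % 2 = 1 ↔ c + r + 2 ≤ q ∨ c = r) (if c < q then p + 1 else p) :=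
        Nat.count_mono_left fun j _ h => hmem j h
    _ ≤ _ := Nat.count_mod_two_eq_one_iff_le _ _
    _ ≤ classBound r p q c := by unfold classBound; split_ifs <;> omega

end Constructions

theorem isLeast_sum_classBound {r p q : ℕ} (hp : 1 ≤ p) (hq₁ : r + 2 ≤ q) (hq₂ : q ≤ 2 * r) :
    IsLeast {m | ∃ D : Set (Fin ((2 * r + 1) * p + q)),
        IsIdCode (pathGraph ((2 * r + 1) * p + q)) r D ∧ D.ncard = m}
      (∑ c ∈ Finset.range (2 * r + 1), classBound r p q c) := by
  classical
  refine ⟨?_, fun m ⟨D, hD, hm⟩ => hm ▸ sum_classBound_le_ncard hp (by omega) (by omega) hD⟩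
  obtain ⟨D, hD, hDcard⟩ : ∃ D : Set (Fin ((2 * r + 1) * p + q)),
      IsIdCode (pathGraph ((2 * r + 1) * p + q)) r D ∧
        D.ncard ≤ ∑ c ∈ Finset.range (2 * r + 1), classBound r p q c := by
    rcases Nat.even_or_odd p with hpar | hpar
    · exact ⟨_, isIdCode_evenCode hpar hp hq₁ hq₂, by
        rw [ncard_preimage_val_eq_count]; exact count_evenCode_le hpar hp (by omega) (by omega)⟩
    · exact ⟨_, isIdCode_oddCode hpar hq₁ hq₂, by
        rw [ncard_preimage_val_eq_count]; exact count_oddCode_le hpar (by omega)⟩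
  exact ⟨D, hD, le_antisymm hDcard (sum_classBound_le_ncard hp (by omega) (by omega) hD)⟩

theorem stmt14_general (r p q : ℕ) (hp : 1 ≤ p) (hq1 : r+2 ≤ q) (hq2 : q ≤ 2*r) :
    (Even p → IsLeast {m | ∃ D : Set (Fin ((2*r+1)*p + q)),
        IsIdCode (SimpleGraph.pathGraph ((2*r+1)*p + q)) r D ∧ D.ncard = m}
      ((2*r+1)*p/2 + q - 1)) ∧
    (Odd p → IsLeast {m | ∃ D : Set (Fin ((2*r+1)*p + q)),
        IsIdCode (SimpleGraph.pathGraph ((2*r+1)*p + q)) r D ∧ D.ncard = m}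
      ((2*r+1)*(p-1)/2 + 2*r + 1)) := by
  refine ⟨fun hpar => ?_, fun hpar => ?_⟩
  · rw [← sum_classBound_of_even (r := r) (q := q) (by omega) (by omega) hpar]
    exact isLeast_sum_classBound hp hq1 hq2
  · rw [← sum_classBound_of_odd (r := r) (q := q) (by omega) (by omega) hpar]
    exact isLeast_sum_classBound hp hq1 hq2

theorem stmt14 (r p q : ℕ) (hr : 1 ≤ r) (hp : 1 ≤ p) (hq1 : r+2 ≤ q) (hq2 : q ≤ 2*r) :
    (Even p → IsLeast {m | ∃ D : Set (Fin ((2*r+1)*p + q)),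
        IsIdCode (SimpleGraph.pathGraph ((2*r+1)*p + q)) r D ∧ D.ncard = m}
      ((2*r+1)*p/2 + q - 1)) ∧
    (Odd p → IsLeast {m | ∃ D : Set (Fin ((2*r+1)*p + q)),
        IsIdCode (SimpleGraph.pathGraph ((2*r+1)*p + q)) r D ∧ D.ncard = m}
      ((2*r+1)*(p-1)/2 + 2*r + 1)) :=
  stmt14_general r p q hp hq1 hq2
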